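/- Let X, Y be nonempty metric spaces, let r ≥ 0, and let R be a correspondence between X and Y such that for all (x,y), (x',y') ∈ R one has e^{−r}·d_Y(y,y') − e^r + 1 ≤ d_X(x,x') ≤ e^r·d_Y(y,y') + e^{2r} − e^r. For t ∈ [0,1], let R_t denote the set R equipped with the pseudometric d_t((x,y), (x',y')) = (1−t)·d_X(x,x') + t·d_Y(y,y'). Then for every partition 0 = t_0 ≤ t_1 ≤ … ≤ t_n = 1, the sum of distances along the path satisfies Σ_{i=0}^{n−1} D(R_{t_i}, R_{t_{i+1}}) ≤ e^{2r} − e^r; in particular, the path t ↦ R_t connecting R_0 (which is at D-distance 0 from X) with R_1 (at D-distance 0 from Y) has length at most e^{2r} − e^r. -/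

import Mathlib

open ENNReal Real

/-- A correspondence between X and Y: both projections are surjective. -/
def IsCorrespondence {X Y : Type*} (R : Set (X × Y)) : Prop :=
  (∀ x : X, ∃ y : Y, (x, y) ∈ R) ∧ (∀ y : Y, ∃ x : X, (x, y) ∈ R)

/-- The quasi-isometric distortion of a correspondence between pseudometric
spaces, in [0,∞]. -/
noncomputable def qDis {X Y : Type*} [PseudoMetricSpace X] [PseudoMetricSpace Y]
    (R : Set (X × Y)) : ℝ≥0∞ :=
  sInf {e : ℝ≥0∞ | ∃ r : ℝ, 0 < r ∧ e = ENNReal.ofReal r ∧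
    ∀ p ∈ R, ∀ q ∈ R,
      Real.exp (-r) * dist p.2 q.2 - Real.exp r + 1 ≤ dist p.1 q.1 ∧
      dist p.1 q.1 ≤ Real.exp r * dist p.2 q.2 + Real.exp (2 * r) - Real.exp r}

/-- The distance D between pseudometric spaces, infimum of quasi-isometric
distortions of correspondences. -/
noncomputable def Ddist (X Y : Type*) [PseudoMetricSpace X] [PseudoMetricSpace Y] : ℝ≥0∞ :=
  ⨅ R : {R : Set (X × Y) // IsCorrespondence R}, qDis R.1

/-- The set R equipped with the interpolated pseudometric
d_t((x,y),(x',y')) = (1−t)·d_X(x,x') + t·d_Y(y,y'), for t ∈ [0,1]. -/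
noncomputable def Rt {X Y : Type*} [PseudoMetricSpace X] [PseudoMetricSpace Y]
    (R : Set (X × Y)) (t : Set.Icc (0 : ℝ) 1) : PseudoMetricSpace ↥R where
  dist p q := (1 - t.1) * dist p.1.1 q.1.1 + t.1 * dist p.1.2 q.1.2
  dist_self p := by simp
  dist_comm p q := by simp only [dist_comm]
  dist_triangle p q m := by
    have h0 : (0 : ℝ) ≤ t.1 := t.2.1
    have h1 : (0 : ℝ) ≤ 1 - t.1 := by have := t.2.2; linarith
    have a := dist_triangle p.1.1 q.1.1 m.1.1
    have b := dist_triangle p.1.2 q.1.2 m.1.2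
    have ha := mul_le_mul_of_nonneg_left a h1
    have hb := mul_le_mul_of_nonneg_left b h0
    try dsimp only
    linarith [ha, hb, mul_add (1 - t.1) (dist p.1.1 q.1.1) (dist q.1.1 m.1.1),
      mul_add t.1 (dist p.1.2 q.1.2) (dist q.1.2 m.1.2)]

/-! ### Auxiliary lemmas -/

lemma Rt_dist {X Y : Type*} [PseudoMetricSpace X] [PseudoMetricSpace Y]
    (R : Set (X × Y)) (t : Set.Icc (0 : ℝ) 1) (p q : ↥R) :
    @dist ↥R (Rt R t).toDist p q
      = (1 - t.1) * dist p.1.1 q.1.1 + t.1 * dist p.1.2 q.1.2 := rfl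

lemma qDis_le_of {X Y : Type*} [PseudoMetricSpace X] [PseudoMetricSpace Y]
    (S : Set (X × Y)) (c : ℝ) (hc : 0 ≤ c)
    (h : ∀ ρ : ℝ, c < ρ → ∀ p ∈ S, ∀ q ∈ S,
      Real.exp (-ρ) * dist p.2 q.2 - Real.exp ρ + 1 ≤ dist p.1 q.1 ∧
      dist p.1 q.1 ≤ Real.exp ρ * dist p.2 q.2 + Real.exp (2 * ρ) - Real.exp ρ) :
    qDis S ≤ ENNReal.ofReal c := by
  refine ENNReal.le_of_forall_pos_le_add fun ε hε _ => ?_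
  have hε' : (0:ℝ) < (ε:ℝ) := hε
  have h1 : qDis S ≤ ENNReal.ofReal (c + ε) := by
    apply sInf_le
    exact ⟨c + ε, by linarith, rfl, h _ (by linarith)⟩
  calc qDis S ≤ ENNReal.ofReal (c + ε) := h1
    _ = ENNReal.ofReal c + ENNReal.ofReal (ε:ℝ) := ENNReal.ofReal_add hc hε'.le
    _ = ENNReal.ofReal c + ε := by rw [ENNReal.ofReal_coe_nnreal]

lemma Ddist_le_of {X Y : Type*} [PseudoMetricSpace X] [PseudoMetricSpace Y]
    (S : Set (X × Y)) (hS : IsCorrespondence S) (c : ℝ) (hc : 0 ≤ c)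
    (h : ∀ ρ : ℝ, c < ρ → ∀ p ∈ S, ∀ q ∈ S,
      Real.exp (-ρ) * dist p.2 q.2 - Real.exp ρ + 1 ≤ dist p.1 q.1 ∧
      dist p.1 q.1 ≤ Real.exp ρ * dist p.2 q.2 + Real.exp (2 * ρ) - Real.exp ρ) :
    Ddist X Y ≤ ENNReal.ofReal c :=
  le_trans (iInf_le _ ⟨S, hS⟩) (qDis_le_of S c hc h)

lemma same_dist_dis (ρ d : ℝ) (hρ : 0 < ρ) (hd : 0 ≤ d) :
    Real.exp (-ρ) * d - Real.exp ρ + 1 ≤ d ∧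
    d ≤ Real.exp ρ * d + Real.exp (2 * ρ) - Real.exp ρ := by
  have h1 : 1 ≤ Real.exp ρ := Real.one_le_exp hρ.le
  have h2 : Real.exp ρ ≤ Real.exp (2 * ρ) := Real.exp_le_exp.2 (by linarith)
  have h3 : Real.exp (-ρ) ≤ 1 := Real.exp_le_one_iff.2 (by linarith)
  constructor
  · nlinarith
  · nlinarith

lemma interp_key (r ρ u a b d : ℝ) (hr : 0 ≤ r) (hρ : 0 < ρ)
    (hu : 0 ≤ u) (hb : 0 ≤ b) (hd0 : 0 ≤ d)
    (hab : a ≤ Real.exp r * b + (Real.exp (2 * r) - Real.exp r))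
    (hρge : u * (Real.exp (2 * r) - Real.exp r) ≤ ρ)
    (hbd : b ≤ a → b ≤ d) :
    u * (a - b) ≤ (Real.exp ρ - 1) * d + (Real.exp (2 * ρ) - Real.exp ρ) := by
  have h1ρ : 1 ≤ Real.exp ρ := Real.one_le_exp hρ.le
  have h2ρ : Real.exp (2 * ρ) = Real.exp ρ * Real.exp ρ := by
    rw [two_mul, Real.exp_add]
  have hρe : ρ + 1 ≤ Real.exp ρ := Real.add_one_le_exp ρ
  rcases le_or_gt a b with h | h
  · have hle : u * (a - b) ≤ 0 := mul_nonpos_of_nonneg_of_nonpos hu (by linarith)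
    nlinarith [mul_nonneg (by linarith : (0:ℝ) ≤ Real.exp ρ - 1) hd0]
  · have hbd' := hbd h.le
    have h1r : 1 ≤ Real.exp r := Real.one_le_exp hr
    have h2r : Real.exp (2 * r) = Real.exp r * Real.exp r := by
      rw [two_mul, Real.exp_add]
    have s1 : a - b ≤ (Real.exp r - 1) * b + (Real.exp (2 * r) - Real.exp r) := by nlinarith
    have s2 : u * (a - b) ≤ u * (Real.exp r - 1) * b + u * (Real.exp (2 * r) - Real.exp r) := by
      nlinarith [mul_le_mul_of_nonneg_left s1 hu]
    have s3 : u * (Real.exp r - 1) ≤ Real.exp ρ - 1 := by nlinarith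
    have s4 : u * (Real.exp r - 1) * b ≤ (Real.exp ρ - 1) * d := by
      have hub : u * (Real.exp r - 1) * b ≤ (Real.exp ρ - 1) * b :=
        mul_le_mul_of_nonneg_right s3 hb
      have : (Real.exp ρ - 1) * b ≤ (Real.exp ρ - 1) * d :=
        mul_le_mul_of_nonneg_left hbd' (by linarith)
      linarith
    have s5 : u * (Real.exp (2 * r) - Real.exp r) ≤ Real.exp (2 * ρ) - Real.exp ρ := by
      nlinarith
    linarith

lemma interp_main (r ρ s t a b : ℝ) (hr : 0 ≤ r)
    (hρc : (t - s) * (Real.exp (2 * r) - Real.exp r) < ρ) (hρ : 0 < ρ)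
    (hs0 : 0 ≤ s) (hst : s ≤ t) (ht1 : t ≤ 1)
    (ha0 : 0 ≤ a) (hb0 : 0 ≤ b)
    (hlow : Real.exp (-r) * b - Real.exp r + 1 ≤ a)
    (hup : a ≤ Real.exp r * b + Real.exp (2 * r) - Real.exp r) :
    Real.exp (-ρ) * ((1 - t) * a + t * b) - Real.exp ρ + 1 ≤ (1 - s) * a + s * b ∧
    (1 - s) * a + s * b ≤ Real.exp ρ * ((1 - t) * a + t * b) + Real.exp (2 * ρ) - Real.exp ρ := by
  have hu : (0:ℝ) ≤ t - s := by linarith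
  have hexr : Real.exp (-r) * Real.exp r = 1 := by rw [← Real.exp_add]; simp
  have h2r : Real.exp (2 * r) = Real.exp r * Real.exp r := by rw [two_mul, Real.exp_add]
  have hab1 : a ≤ Real.exp r * b + (Real.exp (2 * r) - Real.exp r) := by linarith
  have hab2 : b ≤ Real.exp r * a + (Real.exp (2 * r) - Real.exp r) := by
    nlinarith [mul_le_mul_of_nonneg_left
      (by linarith : Real.exp (-r) * b ≤ a + Real.exp r - 1) (Real.exp_pos r).le]
  have hρge : (t - s) * (Real.exp (2 * r) - Real.exp r) ≤ ρ := hρc.le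
  have hds0 : (0:ℝ) ≤ (1 - s) * a + s * b := by
    nlinarith [mul_nonneg (by linarith : (0:ℝ) ≤ 1 - s) ha0, mul_nonneg hs0 hb0]
  have hdt0 : (0:ℝ) ≤ (1 - t) * a + t * b := by
    nlinarith [mul_nonneg (by linarith : (0:ℝ) ≤ 1 - t) ha0,
      mul_nonneg (by linarith : (0:ℝ) ≤ t) hb0]
  have h1ρ : 1 ≤ Real.exp ρ := Real.one_le_exp hρ.le
  have h2ρ : Real.exp (2 * ρ) = Real.exp ρ * Real.exp ρ := by rw [two_mul, Real.exp_add]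
  have key1 : (t - s) * (a - b)
      ≤ (Real.exp ρ - 1) * ((1 - t) * a + t * b) + (Real.exp (2 * ρ) - Real.exp ρ) := by
    refine interp_key r ρ (t - s) a b _ hr hρ hu hb0 hdt0 hab1 hρge fun hba => ?_
    nlinarith [mul_nonneg (by linarith : (0:ℝ) ≤ 1 - t) (sub_nonneg.2 hba)]
  have key2 : (t - s) * (b - a)
      ≤ (Real.exp ρ - 1) * ((1 - s) * a + s * b) + (Real.exp (2 * ρ) - Real.exp ρ) := by
    refine interp_key r ρ (t - s) b a _ hr hρ hu ha0 hds0 hab2 hρge fun hba => ?_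
    nlinarith [mul_nonneg hs0 (sub_nonneg.2 hba)]
  constructor
  · have hdt_le : (1 - t) * a + t * b
        ≤ Real.exp ρ * ((1 - s) * a + s * b) + (Real.exp (2 * ρ) - Real.exp ρ) := by
      nlinarith
    have hexρ : Real.exp (-ρ) * Real.exp ρ = 1 := by rw [← Real.exp_add]; simp
    nlinarith [mul_le_mul_of_nonneg_left hdt_le (Real.exp_pos (-ρ)).le]
  · nlinarith

/-- The key step: between `Rt R s` and `Rt R t` the distance `D` is at most
`(t - s) * (e^{2r} - e^r)`, using the diagonal correspondence. -/
lemma Ddist_Rt_le {X Y : Type*} [MetricSpace X] [MetricSpace Y]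
    (r : ℝ) (hr : 0 ≤ r) (R : Set (X × Y))
    (hRdis : ∀ p ∈ R, ∀ q ∈ R,
      exp (-r) * dist p.2 q.2 - exp r + 1 ≤ dist p.1 q.1 ∧
      dist p.1 q.1 ≤ exp r * dist p.2 q.2 + exp (2 * r) - exp r)
    (s t : Set.Icc (0 : ℝ) 1) (hst : s.1 ≤ t.1) :
    @Ddist ↥R ↥R (Rt R s) (Rt R t)
      ≤ ENNReal.ofReal ((t.1 - s.1) * (Real.exp (2 * r) - Real.exp r)) := by
  have hC : 0 ≤ Real.exp (2 * r) - Real.exp r :=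
    sub_nonneg.2 (Real.exp_le_exp.2 (by linarith))
  have hu : (0:ℝ) ≤ t.1 - s.1 := sub_nonneg.2 hst
  have hS : IsCorrespondence {q : ↥R × ↥R | q.1 = q.2} :=
    ⟨fun p => ⟨p, rfl⟩, fun p => ⟨p, rfl⟩⟩
  refine @Ddist_le_of ↥R ↥R (Rt R s) (Rt R t) _ hS _ (mul_nonneg hu hC) ?_
  intro ρ hρc p hp q hq
  have hρ : 0 < ρ := lt_of_le_of_lt (mul_nonneg hu hC) hρc
  have hp' : p.1 = p.2 := hp
  have hq' : q.1 = q.2 := hq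
  have hdist1 : @dist ↥R (Rt R s).toDist p.1 q.1
      = (1 - s.1) * dist p.1.1.1 q.1.1.1 + s.1 * dist p.1.1.2 q.1.1.2 := rfl
  have hdist2 : @dist ↥R (Rt R t).toDist p.2 q.2
      = (1 - t.1) * dist p.1.1.1 q.1.1.1 + t.1 * dist p.1.1.2 q.1.1.2 := by
    rw [← hp', ← hq']; rfl
  obtain ⟨hlow, hup⟩ := hRdis p.1.1 p.1.2 q.1.1 q.1.2
  rw [hdist1, hdist2]
  exact interp_main r ρ s.1 t.1 _ _ hr hρc hρ s.2.1 hst t.2.2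
    dist_nonneg dist_nonneg hlow hup

/-- The curve t ↦ R_t connects X (at D-distance 0 from R_0) with Y (at
D-distance 0 from R_1), and along every partition 0 = t_0 ≤ … ≤ t_n = 1 the sum
of the D-distances is at most e^{2r} − e^r; hence the path has length at most
e^{2r} − e^r. -/
theorem Rt_path_length_le
    {X Y : Type*} [MetricSpace X] [MetricSpace Y] [Nonempty X] [Nonempty Y]
    (r : ℝ) (hr : 0 ≤ r) (R : Set (X × Y)) (hR : IsCorrespondence R)
    (hRdis : ∀ p ∈ R, ∀ q ∈ R,
      exp (-r) * dist p.2 q.2 - exp r + 1 ≤ dist p.1 q.1 ∧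
      dist p.1 q.1 ≤ exp r * dist p.2 q.2 + exp (2 * r) - exp r) :
    (@Ddist X ↥R _ (Rt R ⟨0, by norm_num⟩) = 0) ∧
    (@Ddist ↥R Y (Rt R ⟨1, by norm_num⟩) _ = 0) ∧
    ∀ (n : ℕ) (t : Fin (n + 1) → Set.Icc (0 : ℝ) 1), Monotone t →
      (t 0).1 = 0 → (t (Fin.last n)).1 = 1 →
      (∑ i : Fin n, @Ddist ↥R ↥R (Rt R (t i.castSucc)) (Rt R (t i.succ))) ≤
        ENNReal.ofReal (exp (2 * r) - exp r) := by
  refine ⟨?_, ?_, ?_⟩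
  · -- D(X, R_0) = 0
    refine le_antisymm ?_ zero_le
    rw [← ENNReal.ofReal_zero]
    set S : Set (X × ↥R) := {q | q.1 = q.2.1.1} with hSdef
    have hS : IsCorrespondence S := by
      constructor
      · intro x; obtain ⟨y, hy⟩ := hR.1 x; exact ⟨⟨(x, y), hy⟩, rfl⟩
      · intro p; exact ⟨p.1.1, rfl⟩
    refine @Ddist_le_of X ↥R _ (Rt R ⟨0, by norm_num⟩) S hS 0 le_rfl ?_
    intro ρ hρ p hp q hq
    have hp' : p.1 = p.2.1.1 := hp
    have hq' : q.1 = q.2.1.1 := hq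
    have hd : @dist ↥R (Rt R ⟨0, by norm_num⟩).toDist p.2 q.2 = dist p.1 q.1 := by
      rw [Rt_dist, hp', hq']; ring
    rw [hd]
    exact same_dist_dis ρ _ hρ dist_nonneg
  · -- D(R_1, Y) = 0
    refine le_antisymm ?_ zero_le
    rw [← ENNReal.ofReal_zero]
    set S : Set (↥R × Y) := {q | q.1.1.2 = q.2} with hSdef
    have hS : IsCorrespondence S := by
      constructor
      · intro p; exact ⟨p.1.2, rfl⟩
      · intro y; obtain ⟨x, hx⟩ := hR.2 y; exact ⟨⟨(x, y), hx⟩, rfl⟩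
    refine @Ddist_le_of ↥R Y (Rt R ⟨1, by norm_num⟩) _ S hS 0 le_rfl ?_
    intro ρ hρ p hp q hq
    have hp' : p.1.1.2 = p.2 := hp
    have hq' : q.1.1.2 = q.2 := hq
    have hd : @dist ↥R (Rt R ⟨1, by norm_num⟩).toDist p.1 q.1 = dist p.2 q.2 := by
      rw [Rt_dist, hp', hq']; ring
    rw [hd]
    exact same_dist_dis ρ _ hρ dist_nonneg
  · -- the path length bound
    intro n t hmono h0 h1
    have hC : 0 ≤ Real.exp (2 * r) - Real.exp r :=
      sub_nonneg.2 (Real.exp_le_exp.2 (by linarith))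
    have step : ∀ i : Fin n,
        @Ddist ↥R ↥R (Rt R (t i.castSucc)) (Rt R (t i.succ))
          ≤ ENNReal.ofReal (((t i.succ).1 - (t i.castSucc).1) * (Real.exp (2 * r) - Real.exp r)) :=
      fun i => Ddist_Rt_le r hr R hRdis _ _
        (Subtype.coe_le_coe.mpr (hmono (Fin.castSucc_lt_succ : i.castSucc < i.succ).le))
    have hnn : ∀ i ∈ Finset.univ (α := Fin n),
        0 ≤ ((t i.succ).1 - (t i.castSucc).1) * (Real.exp (2 * r) - Real.exp r) :=
      fun i _ => mul_nonneg
        (sub_nonneg.2 (Subtype.coe_le_coe.mpr (hmono (Fin.castSucc_lt_succ : i.castSucc < i.succ).le))) hC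
    calc (∑ i : Fin n, @Ddist ↥R ↥R (Rt R (t i.castSucc)) (Rt R (t i.succ)))
        ≤ ∑ i : Fin n, ENNReal.ofReal
            (((t i.succ).1 - (t i.castSucc).1) * (Real.exp (2 * r) - Real.exp r)) :=
          Finset.sum_le_sum fun i _ => step i
      _ = ENNReal.ofReal (∑ i : Fin n,
            ((t i.succ).1 - (t i.castSucc).1) * (Real.exp (2 * r) - Real.exp r)) :=
          (ENNReal.ofReal_sum_of_nonneg hnn).symm
      _ = ENNReal.ofReal (Real.exp (2 * r) - Real.exp r) := by
          congr 1
          rw [← Finset.sum_mul]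
          have tel : (∑ i : Fin n, ((t i.succ).1 - (t i.castSucc).1)) = 1 := by
            set f : ℕ → ℝ :=
              fun k => (t ⟨min k n, Nat.lt_succ_of_le (min_le_right k n)⟩).1 with hf
            have hkey : ∀ i : Fin n,
                ((t i.succ).1 - (t i.castSucc).1) = f (i.1 + 1) - f i.1 := by
              intro i
              have e1 : (⟨min (i.1 + 1) n, Nat.lt_succ_of_le (min_le_right _ n)⟩ : Fin (n+1))
                  = i.succ := by
                apply Fin.ext
                simp [Nat.min_eq_left (Nat.succ_le_of_lt i.isLt)]
              have e2 : (⟨min i.1 n, Nat.lt_succ_of_le (min_le_right _ n)⟩ : Fin (n+1))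
                  = i.castSucc := by
                apply Fin.ext
                simp [Nat.min_eq_left i.isLt.le]
              simp only [hf, e1, e2]
            calc (∑ i : Fin n, ((t i.succ).1 - (t i.castSucc).1))
                = ∑ i : Fin n, (f (i.1 + 1) - f i.1) := by
                  exact Finset.sum_congr rfl fun i _ => hkey i
              _ = ∑ i ∈ Finset.range n, (f (i + 1) - f i) :=
                  Fin.sum_univ_eq_sum_range (fun k => f (k + 1) - f k) n
              _ = f n - f 0 := Finset.sum_range_sub f n
              _ = 1 := by
                  have en : (⟨min n n, Nat.lt_succ_of_le (min_le_right n n)⟩ : Fin (n+1))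
                      = Fin.last n := by apply Fin.ext; simp
                  have e0 : (⟨min 0 n, Nat.lt_succ_of_le (min_le_right 0 n)⟩ : Fin (n+1))
                      = 0 := by apply Fin.ext; simp
                  simp only [hf, en, e0, h0, h1]
                  norm_num
          rw [tel, one_mul]
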